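/- If an execution fragment π from s₀ to a deadlock state s_n has length n, and we repeatedly transform π by, at step i, either moving forward (if the (i+1)-th action already lies in ample of the current state) or commuting the first occurrence of an ample action to position i+1 (using k applications of commutativity when it occurs k steps later), then after n steps we obtain an execution π_n of the same length n, with the same first and last states as π, in which every transition s_j →α_j s_{j+1} satisfies α_j ∈ ample(s_j). -/

import Mathlib

/-- An action-deterministic transition system: each action has at most one
successor from each state, given by a partial step function. -/
structure TS (S A : Type) where
  step : A → S → Option S

namespace TS

variable {S A : Type}

/-- An action is enabled in a state if it has a successor. -/
def Enabled (T : TS S A) (a : A) (s : S) : Prop := (T.step a s).isSome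

/-- `I` is an independence relation: for every state where two distinct
`I`-related actions are both enabled, each remains enabled after the other
(enabledness) and the two execution orders yield the same state (commutativity). -/
def IndepRel (T : TS S A) (I : A → A → Prop) : Prop :=
  ∀ a b s, I a b → a ≠ b → T.Enabled a s → T.Enabled b s →
    ∃ sa sb, T.step a s = some sa ∧ T.step b s = some sb ∧
      T.Enabled b sa ∧ T.Enabled a sb ∧ T.step b sa = T.step a sb

/-- A deadlock state: no action is enabled. -/
def Deadlock (T : TS S A) (s : S) : Prop := ∀ a : A, ¬ T.Enabled a s

/-- `Run T l s t`: an execution fragment from `s` to `t` whose sequence of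
action labels is `l` (so its length is `l.length`). -/
inductive Run (T : TS S A) : List A → S → S → Prop
  | nil (s : S) : Run T [] s s
  | cons {a : A} {l : List A} {s s' t : S} :
      T.step a s = some s' → Run T l s' t → Run T (a :: l) s t

/-- `ARun T amp l s t`: an execution fragment in the reduced graph that keeps,
from each state `u`, only the transitions labeled by actions in `amp u`. -/
inductive ARun (T : TS S A) (amp : S → Set A) : List A → S → S → Prop
  | nil (s : S) : ARun T amp [] s s
  | cons {a : A} {l : List A} {s s' t : S} :
      a ∈ amp s → T.step a s = some s' → ARun T amp l s' t → ARun T amp (a :: l) s t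

end TS

/-!
Under the deadlock hypothesis every nonempty fragment from `s` contains an action of `amp s`:
otherwise an ample action `b` is independent of, and distinct from, every action of the
fragment, so by the enabledness part of independence it stays enabled all the way to the
deadlock state. Commuting the first occurrence of such a `b` to the front, past actions that
are all independent of it, gives a fragment `s →b s' → ⋯ → t` of the same length and
endpoints; the induction on the length then continues from `s'`.
-/

namespace TS

variable {S A : Type} {T : TS S A}

theorem Enabled.of_step {a : A} {s s' : S} (h : T.step a s = some s') : T.Enabled a s := by
  simp [Enabled, h]

theorem run_append_iff {m l : List A} {s t : S} :
    T.Run (m ++ l) s t ↔ ∃ u, T.Run m s u ∧ T.Run l u t := by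
  induction m generalizing s with
  | nil => exact ⟨fun h => ⟨s, .nil s, h⟩, fun ⟨_, hm, hl⟩ => by cases hm; exact hl⟩
  | cons a m ih =>
    constructor
    · rintro (_ | ⟨hstep, hrun⟩)
      obtain ⟨u, hm, hl⟩ := ih.mp hrun
      exact ⟨u, .cons hstep hm, hl⟩
    · rintro ⟨u, _ | ⟨hstep, hm⟩, hl⟩
      exact .cons hstep (ih.mpr ⟨u, hm, hl⟩)

section Independence

variable {I : A → A → Prop} (hI : T.IndepRel I) {b : A}
include hI

theorem Run.exists_step_of_indep {m : List A} {s t : S} (hrun : T.Run m s t)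
    (hb : T.Enabled b s) (hm : ∀ a ∈ m, I a b ∧ a ≠ b) :
    ∃ s' t', T.step b s = some s' ∧ T.step b t = some t' ∧ T.Run m s' t' := by
  induction hrun with
  | nil s =>
    obtain ⟨s', hs'⟩ := Option.isSome_iff_exists.mp hb
    exact ⟨s', s', hs', hs', .nil s'⟩
  | @cons a l s s₁ t hstep _ ih =>
    obtain ⟨hIab, hne⟩ := hm a List.mem_cons_self
    obtain ⟨sa, sb, hsa, hsb, hb₁, -, hdiamond⟩ := hI a b s hIab hne (.of_step hstep) hb
    obtain rfl : sa = s₁ := Option.some_injective _ (hsa.symm.trans hstep)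
    obtain ⟨s₁', t', hs₁', ht', hrun'⟩ :=
      ih hb₁ fun x hx => hm x (List.mem_cons_of_mem _ hx)
    exact ⟨sb, t', hsb, ht', .cons (hdiamond ▸ hs₁') hrun'⟩

theorem Run.enabled_of_indep {m : List A} {s t : S} (hrun : T.Run m s t)
    (hb : T.Enabled b s) (hm : ∀ a ∈ m, I a b ∧ a ≠ b) : T.Enabled b t := by
  obtain ⟨-, t', -, ht', -⟩ := hrun.exists_step_of_indep hI hb hm
  exact .of_step ht'

theorem Run.exists_step_of_append_cons {m rest : List A} {s t : S}
    (hrun : T.Run (m ++ b :: rest) s t) (hb : T.Enabled b s)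
    (hm : ∀ a ∈ m, I a b ∧ a ≠ b) :
    ∃ s', T.step b s = some s' ∧ T.Run (m ++ rest) s' t := by
  obtain ⟨u, hrun_m, _ | ⟨hstep, hrun_rest⟩⟩ := run_append_iff.mp hrun
  obtain ⟨s', u', hs', hu', hrun_m'⟩ := hrun_m.exists_step_of_indep hI hb hm
  obtain rfl : u' = _ := Option.some_injective _ (hu'.symm.trans hstep)
  exact ⟨s', hs', run_append_iff.mpr ⟨_, hrun_m', hrun_rest⟩⟩

end Independence

section Ample

variable {I : A → A → Prop} {amp : S → Set A}
  (hsub : ∀ s, ∀ a ∈ amp s, T.Enabled a s)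
  (hC0 : ∀ s, (∃ a, T.Enabled a s) → (amp s).Nonempty)
  (hind : ∀ (s : S) (m : List A) (u : S), T.Run m s u →
    (∀ a ∈ m, a ∉ amp s) → ∀ b ∈ amp s, ∀ a ∈ m, I a b)

include hind in
theorem Run.indep_and_ne_of_forall_notMem_amp {m : List A} {s u : S} (hrun : T.Run m s u)
    (hm : ∀ a ∈ m, a ∉ amp s) {b : A} (hb : b ∈ amp s) : ∀ a ∈ m, I a b ∧ a ≠ b :=
  fun a ha => ⟨hind s m u hrun hm b hb a ha, fun hab => hm a ha (hab ▸ hb)⟩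

include hsub hC0 hind in
theorem Run.exists_mem_amp_of_deadlock (hI : T.IndepRel I) {l : List A} {s t : S}
    (hrun : T.Run l s t) (hdead : T.Deadlock t) (hl : l ≠ []) : ∃ a ∈ l, a ∈ amp s := by
  by_contra! hno
  have hen : ∃ a, T.Enabled a s := by
    cases hrun with
    | nil => exact absurd rfl hl
    | cons hstep _ => exact ⟨_, .of_step hstep⟩
  obtain ⟨b, hb⟩ := hC0 s hen
  exact hdead b <| hrun.enabled_of_indep hI (hsub s b hb)
    (hrun.indep_and_ne_of_forall_notMem_amp hind hno hb)

include hsub hC0 hind in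
theorem Run.exists_amp_step_of_deadlock (hI : T.IndepRel I) {l : List A} {s t : S}
    (hrun : T.Run l s t) (hdead : T.Deadlock t) (hl : l ≠ []) :
    ∃ b ∈ amp s, ∃ s' l', T.step b s = some s' ∧ T.Run l' s' t ∧ l'.length + 1 = l.length := by
  classical
  obtain ⟨a, ha, has⟩ := hrun.exists_mem_amp_of_deadlock hsub hC0 hind hI hdead hl
  obtain ⟨b, hfind⟩ : ∃ b, l.find? (· ∈ amp s) = some b :=
    Option.isSome_iff_exists.mp (List.find?_isSome.mpr ⟨a, ha, decide_eq_true has⟩)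
  obtain ⟨hb, m, rest, rfl, hm⟩ := List.find?_eq_some_iff_append.mp hfind
  simp only [decide_eq_true_eq, Bool.not_eq_true', decide_eq_false_iff_not] at hb hm
  obtain ⟨u, hrun_m, -⟩ := run_append_iff.mp hrun
  obtain ⟨s', hstep, hrun'⟩ := hrun.exists_step_of_append_cons hI (hsub s b hb)
    (hrun_m.indep_and_ne_of_forall_notMem_amp hind hm hb)
  refine ⟨b, hb, s', m ++ rest, hstep, hrun', ?_⟩
  simp only [List.length_append, List.length_cons]
  omega

include hsub hC0 hind in
theorem Run.exists_aRun_of_deadlock (hI : T.IndepRel I) {l : List A} {s t : S}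
    (hrun : T.Run l s t) (hdead : T.Deadlock t) :
    ∃ l', l'.length = l.length ∧ T.ARun amp l' s t := by
  induction hn : l.length generalizing l s with
  | zero =>
    obtain rfl := List.length_eq_zero_iff.mp hn
    cases hrun
    exact ⟨[], rfl, .nil _⟩
  | succ n ih =>
    obtain ⟨b, hb, s', l', hstep, hrun', hlen⟩ := hrun.exists_amp_step_of_deadlock hsub hC0 hind
      hI hdead (List.ne_nil_of_length_eq_add_one hn)
    obtain ⟨l'', hlen', harun⟩ := ih hrun' (by omega)
    exact ⟨b :: l'', by simp only [List.length_cons]; omega, .cons hb hstep harun⟩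

end Ample

end TS

theorem stmt16_general {S A : Type} (T : TS S A) (I : A → A → Prop) (hI : T.IndepRel I)
    (amp : S → Set A)
    (hsub : ∀ (s : S), ∀ a ∈ amp s, T.Enabled a s)
    (hC0 : ∀ s : S, (amp s).Nonempty ↔ ∃ a, T.Enabled a s)
    (hind : ∀ (s : S) (m : List A) (u : S), T.Run m s u →
      (∀ a ∈ m, a ∉ amp s) → ∀ b ∈ amp s, ∀ a ∈ m, I a b)
    (s0 sn : S) (l : List A)
    (hrun : T.Run l s0 sn)
    (hdead : T.Deadlock sn) :
    ∃ l' : List A, l'.length = l.length ∧ T.ARun amp l' s0 sn :=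
  hrun.exists_aRun_of_deadlock hsub (fun s => (hC0 s).mpr) hind hI hdead

/-- in the setting of the ample-set reduction proof (C0, C1, and
the condition that whenever `amp s ≠ enabled(s)` the members of `amp s` are
independent of all actions occurring in any execution fragment from `s` before
the first occurrence of an `amp s` member), the step-by-step transformation of
an execution fragment `π` from `s₀` to a deadlock state `s_n` of length `n`
(moving forward when the next action is ample, otherwise commuting the first
ample action to the front) yields an execution of the same length `n`, with the
same first and last states, all of whose transitions use ample actions. -/
theorem stmt16 {S A : Type} (T : TS S A) (I : A → A → Prop) (hI : T.IndepRel I)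
    (amp : S → Set A)
    (hsub : ∀ (s : S), ∀ a ∈ amp s, T.Enabled a s)
    (hC0 : ∀ s : S, (amp s).Nonempty ↔ ∃ a, T.Enabled a s)
    (hC1 : ∀ (s : S) (m : List A) (g : A) (u : S), T.Run (m ++ [g]) s u →
      (∃ b ∈ amp s, ¬ I g b) → ∃ a ∈ m, a ∈ amp s)
    (hind : ∀ (s : S) (m : List A) (u : S), T.Run m s u →
      (∀ a ∈ m, a ∉ amp s) → ∀ b ∈ amp s, ∀ a ∈ m, I a b)
    (s0 sn : S) (l : List A)
    (hrun : T.Run l s0 sn)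
    (hdead : T.Deadlock sn) :
    ∃ l' : List A, l'.length = l.length ∧ T.ARun amp l' s0 sn :=
  stmt16_general T I hI amp hsub hC0 hind s0 sn l hrun hdead
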